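/- arXiv:2605.15742 — 4 statements merged into one kernel-verified Lean document; each statement's English description precedes it below -/
import Mathlib

section
/- Let D be the open unit ball B(0,1) in ℝ², κ > 0, γ > 0. Define the corrected weight 𝐌₀(r) := Z₀⁻¹((1−|r|²)/(1+γ|r|²))^{κ/(2(1+γ))} for r ∈ D, where Z₀ := ∫_D ((1−|s|²)/(1+γ|s|²))^{κ/(2(1+γ))} ds, and let 𝒜(r) := 3|r|² I − 2 r⊗r (a 2×2 symmetric matrix). Then for every r ∈ D: κ·(r/(1−|r|²))·𝐌₀(r) + ∇𝐌₀(r) + γ·𝒜(r)·∇𝐌₀(r) = 0. -/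
/-!
`𝐌₀` is radial, `𝐌₀(r) = f(|r|²)`, so `∇𝐌₀(r) = 2 f'(|r|²) r` is parallel to `r`. Since
`𝒜(r) r = |r|² r`, the corrected operator acts on it as multiplication by `1 + γ|r|²`. The
logarithmic derivative of the profile `((1 - t)/(1 + γt))^p` is `-p(1 + γ)/((1 - t)(1 + γt))`,
and the exponent `p = κ/(2(1 + γ))` is chosen so that `(1 + γ|r|²) ∇𝐌₀(r) = -κ r 𝐌₀(r)/(1 - |r|²)`,
which cancels the FENE drift.
-/

open MeasureTheory Real
open scoped RealInnerProductSpace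

noncomputable section

abbrev E2 : Type := EuclideanSpace ℝ (Fin 2)

theorem HasDerivAt.hasGradientAt_comp_norm_sq {F : Type*} [NormedAddCommGroup F]
    [InnerProductSpace ℝ F] [CompleteSpace F] {f : ℝ → ℝ} {f' : ℝ} {x : F}
    (hf : HasDerivAt f f' (‖x‖ ^ 2)) :
    HasGradientAt (fun y => f (‖y‖ ^ 2)) ((2 * f') • x) x := by
  rw [hasGradientAt_iff_hasFDerivAt]
  refine (hf.comp_hasFDerivAt x (hasFDerivAt_id x).norm_sq).congr_fderiv ?_
  ext y
  simp
  ring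

/-- `𝒜(r) (c r) = c |r|² r` for `𝒜(r) = 3|r|² I - 2 r⊗r`. -/
theorem stretching_smul_self {F : Type*} [NormedAddCommGroup F] [InnerProductSpace ℝ F]
    (c : ℝ) (r : F) :
    (3 * ‖r‖ ^ 2) • (c • r) - (2 * ⟪r, c • r⟫) • r = (c * ‖r‖ ^ 2) • r := by
  rw [real_inner_smul_right, real_inner_self_eq_norm_sq]
  module

def correctedProfile (γ p s : ℝ) : ℝ := ((1 - s) / (1 + γ * s)) ^ p

theorem hasDerivAt_correctedProfile {γ p s : ℝ} (hs : s < 1) (hγs : 0 < 1 + γ * s) :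
    HasDerivAt (correctedProfile γ p)
      (-(p * (1 + γ)) / ((1 - s) * (1 + γ * s)) * correctedProfile γ p s) s := by
  have hquot : HasDerivAt (fun s : ℝ => (1 - s) / (1 + γ * s))
      ((-1 * (1 + γ * s) - (1 - s) * γ) / (1 + γ * s) ^ 2) s :=
    ((hasDerivAt_id s).const_sub 1).div
      (((hasDerivAt_id s).const_mul γ).const_add 1 |>.congr_deriv (mul_one γ)) hγs.ne'
  have hpos : 0 < (1 - s) / (1 + γ * s) := div_pos (by linarith) hγs
  convert hquot.rpow_const (p := p) (Or.inl hpos.ne') using 1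
  · rfl
  rw [correctedProfile, rpow_sub_one hpos.ne']
  have : 1 - s ≠ 0 := by linarith
  field_simp
  ring

theorem corrected_weight_equilibrium_general (κ γ : ℝ) (hγ : 0 < γ)
    (Z₀ : ℝ)
    (M₀ : E2 → ℝ) (hM₀ : ∀ r, M₀ r = Z₀⁻¹ *
      ((1 - ‖r‖ ^ 2) / (1 + γ * ‖r‖ ^ 2)) ^ (κ / (2 * (1 + γ)))) :
    ∀ r ∈ Metric.ball (0 : E2) 1,
      (κ * M₀ r / (1 - ‖r‖ ^ 2)) • r + gradient M₀ r
        + γ • ((3 * ‖r‖ ^ 2) • gradient M₀ r - (2 * ⟪r, gradient M₀ r⟫) • r) = 0 := by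
  intro r hr
  have ht : ‖r‖ ^ 2 < 1 := pow_lt_one₀ (norm_nonneg r) (mem_ball_zero_iff.mp hr) two_ne_zero
  have hγt : 0 < 1 + γ * ‖r‖ ^ 2 := by positivity
  have hM : M₀ = fun y => Z₀⁻¹ * correctedProfile γ (κ / (2 * (1 + γ))) (‖y‖ ^ 2) := funext hM₀
  have hgrad : gradient M₀ r = (-(κ * M₀ r) / ((1 - ‖r‖ ^ 2) * (1 + γ * ‖r‖ ^ 2))) • r := by
    rw [(((hasDerivAt_correctedProfile ht hγt).const_mul Z₀⁻¹).hasGradientAt_comp_norm_sq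
      |>.congr_of_eventuallyEq (Filter.EventuallyEq.of_eq hM)).gradient, hM₀, correctedProfile]
    congr 1
    field_simp
  rw [hgrad, stretching_smul_self]
  have h1t : 1 - ‖r‖ ^ 2 ≠ 0 := by linarith
  match_scalars
  field_simp
  ring

/-- The corrected weight `𝐌₀(r) = Z₀⁻¹ ((1-|r|²)/(1+γ|r|²))^{κ/(2(1+γ))}` is the
equilibrium density of the FENE drift corrected by the turbulent-stretching matrix
`γ𝒜(r)` with `𝒜(r) = 3|r|² I - 2 r⊗r`:
`κ (r/(1-|r|²)) 𝐌₀(r) + ∇𝐌₀(r) + γ 𝒜(r) ∇𝐌₀(r) = 0` on the open unit ball of ℝ². -/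
theorem corrected_weight_equilibrium (κ γ : ℝ) (hκ : 0 < κ) (hγ : 0 < γ)
    (Z₀ : ℝ) (hZ₀ : Z₀ = ∫ s in Metric.ball (0 : E2) 1,
      ((1 - ‖s‖ ^ 2) / (1 + γ * ‖s‖ ^ 2)) ^ (κ / (2 * (1 + γ))))
    (M₀ : E2 → ℝ) (hM₀ : ∀ r, M₀ r = Z₀⁻¹ *
      ((1 - ‖r‖ ^ 2) / (1 + γ * ‖r‖ ^ 2)) ^ (κ / (2 * (1 + γ)))) :
    ∀ r ∈ Metric.ball (0 : E2) 1,
      (κ * M₀ r / (1 - ‖r‖ ^ 2)) • r + gradient M₀ r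
        + γ • ((3 * ‖r‖ ^ 2) • gradient M₀ r - (2 * ⟪r, gradient M₀ r⟫) • r) = 0 :=
  corrected_weight_equilibrium_general κ γ hγ Z₀ M₀ hM₀
end
end

section
/- Let κ > 0, σ > 0, let φ : [0,1] → [0,1] be measurable, and let D be the open unit ball B(0,1) in ℝ². Define M_φ(r) := exp(−κ ∫₀^{|r|} s ds / ((1−s²)(1+σ φ(s)² s²))) for r ∈ D. Then for every r ∈ D: (1−|r|²)^{κ/2} ≤ M_φ(r) ≤ ((1−|r|²)/(1+σ|r|²))^{κ/(2(1+σ))}. In particular the cutoff weight M_φ is sandwiched between the FENE weight (1−|r|²)^{κ/2} and the corrected weight. -/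
open MeasureTheory Real

noncomputable section

/-!
Write `M_φ(r) = exp(-κ I_φ(|r|))`. Since `0 ≤ φ² ≤ 1` and `σ ≥ 0`, the integrand decreases in
`φ²`, so `I_φ` lies between the integrals for `φ ≡ 1` and `φ ≡ 0`. Both are elementary:
`I_0(R) = -½ log(1 - R²)`, and the partial fraction decomposition
`s/((1 - s²)(1 + σs²)) = (s/(1 - s²) + σs/(1 + σs²))/(1 + σ)` gives
`I_1(R) = (log(1 + σR²) - log(1 - R²)) / (2(1 + σ))`. Exponentiating yields the two weights.
-/

def cutoffDensity (σ : ℝ) (φ : ℝ → ℝ) (s : ℝ) : ℝ :=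
  s / ((1 - s ^ 2) * (1 + σ * φ s ^ 2 * s ^ 2))

section CutoffDensity

variable {σ : ℝ} {φ ψ : ℝ → ℝ} {s R : ℝ}

theorem sq_lt_one_of_mem_uIcc (hR : R ^ 2 < 1) (hs : s ∈ Set.uIcc 0 R) : s ^ 2 < 1 := by
  have h := Set.abs_sub_left_of_mem_uIcc hs
  simp only [sub_zero] at h
  exact (sq_le_sq.mpr h).trans_lt hR

theorem measurable_cutoffDensity (hφ : Measurable φ) : Measurable (cutoffDensity σ φ) := by
  unfold cutoffDensity
  fun_prop

theorem cutoffDensity_nonneg (hσ : 0 ≤ σ) (hs0 : 0 ≤ s) (hs1 : s ^ 2 < 1) :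
    0 ≤ cutoffDensity σ φ s := by
  unfold cutoffDensity
  have : 0 < 1 - s ^ 2 := by linarith
  positivity

theorem cutoffDensity_le_cutoffDensity (hσ : 0 ≤ σ) (hs0 : 0 ≤ s) (hs1 : s ^ 2 < 1)
    (hφψ : φ s ^ 2 ≤ ψ s ^ 2) : cutoffDensity σ ψ s ≤ cutoffDensity σ φ s := by
  unfold cutoffDensity
  have : 0 < 1 - s ^ 2 := by linarith
  gcongr

theorem intervalIntegrable_cutoffDensity (hσ : 0 ≤ σ) (hφ : Measurable φ) (hR0 : 0 ≤ R)
    (hR : R ^ 2 < 1) : IntervalIntegrable (cutoffDensity σ φ) volume 0 R := by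
  have hfene : IntervalIntegrable (cutoffDensity σ 0) volume 0 R := by
    refine ContinuousOn.intervalIntegrable fun s hs => ?_
    have : 1 - s ^ 2 ≠ 0 := (sub_pos.mpr (sq_lt_one_of_mem_uIcc hR hs)).ne'
    unfold cutoffDensity
    fun_prop (disch := simpa)
  refine hfene.mono_fun (measurable_cutoffDensity hφ).aestronglyMeasurable ?_
  rw [Set.uIoc_of_le hR0]
  refine (ae_restrict_iff' measurableSet_Ioc).mpr (.of_forall fun s hs => ?_)
  have hs1 : s ^ 2 < 1 := by nlinarith [hs.1, hs.2]
  simp only [norm_of_nonneg (cutoffDensity_nonneg hσ hs.1.le hs1)]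
  exact cutoffDensity_le_cutoffDensity hσ hs.1.le hs1 (by simp [sq_nonneg])

theorem integral_cutoffDensity_zero (hR : R ^ 2 < 1) :
    ∫ s in (0 : ℝ)..R, cutoffDensity σ 0 s = -log (1 - R ^ 2) / 2 := by
  have hderiv : ∀ s ∈ Set.uIcc 0 R,
      HasDerivAt (fun s => -log (1 - s ^ 2) / 2) (cutoffDensity σ 0 s) s := by
    intro s hs
    have hs1 : 1 - s ^ 2 ≠ 0 := (sub_pos.mpr (sq_lt_one_of_mem_uIcc hR hs)).ne'
    refine ((((hasDerivAt_pow 2 s).const_sub 1).log hs1).neg.div_const 2).congr_deriv ?_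
    simp only [cutoffDensity, Pi.zero_apply]
    field_simp
    ring
  have hcont : ContinuousOn (cutoffDensity σ 0) (Set.uIcc 0 R) := fun s hs => by
    have : 1 - s ^ 2 ≠ 0 := (sub_pos.mpr (sq_lt_one_of_mem_uIcc hR hs)).ne'
    unfold cutoffDensity
    fun_prop (disch := simpa)
  rw [intervalIntegral.integral_eq_sub_of_hasDerivAt hderiv hcont.intervalIntegrable]
  simp

theorem integral_cutoffDensity_one (hσ : -1 < σ) (hR : R ^ 2 < 1) :
    ∫ s in (0 : ℝ)..R, cutoffDensity σ 1 s =
      (log (1 + σ * R ^ 2) - log (1 - R ^ 2)) / (2 * (1 + σ)) := by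
  have hden : ∀ s ∈ Set.uIcc 0 R, 1 - s ^ 2 ≠ 0 ∧ 1 + σ * s ^ 2 ≠ 0 := fun s hs => by
    have := sq_lt_one_of_mem_uIcc hR hs
    constructor <;> nlinarith [sq_nonneg s]
  have hderiv : ∀ s ∈ Set.uIcc 0 R, HasDerivAt
      (fun s => (log (1 + σ * s ^ 2) - log (1 - s ^ 2)) / (2 * (1 + σ)))
      (cutoffDensity σ 1 s) s := by
    intro s hs
    obtain ⟨hs1, hσs⟩ := hden s hs
    refine ((((((hasDerivAt_pow 2 s).const_mul σ).const_add 1).log hσs).sub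
      (((hasDerivAt_pow 2 s).const_sub 1).log hs1)).div_const (2 * (1 + σ))).congr_deriv ?_
    have : 1 + σ ≠ 0 := by linarith
    simp only [cutoffDensity, Pi.one_apply, one_pow, mul_one]
    field_simp
    ring
  have hcont : ContinuousOn (cutoffDensity σ 1) (Set.uIcc 0 R) := fun s hs => by
    obtain ⟨hs1, hσs⟩ := hden s hs
    unfold cutoffDensity
    fun_prop (disch := simp [hs1, hσs])
  rw [intervalIntegral.integral_eq_sub_of_hasDerivAt hderiv hcont.intervalIntegrable]
  simp

theorem integral_cutoffDensity_mem_Icc (hσ : 0 ≤ σ) (hφ : Measurable φ)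
    (hφ1 : ∀ s ∈ Set.Icc 0 R, φ s ^ 2 ≤ 1) (hR0 : 0 ≤ R) (hR : R ^ 2 < 1) :
    ∫ s in (0 : ℝ)..R, cutoffDensity σ φ s ∈ Set.Icc
      ((log (1 + σ * R ^ 2) - log (1 - R ^ 2)) / (2 * (1 + σ))) (-log (1 - R ^ 2) / 2) := by
  have hsq : ∀ s ∈ Set.Icc 0 R, s ^ 2 < 1 := fun s hs => by nlinarith [hs.1, hs.2]
  rw [← integral_cutoffDensity_one (by linarith) hR, ← integral_cutoffDensity_zero hR]
  constructor <;> refine intervalIntegral.integral_mono_on hR0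
    (intervalIntegrable_cutoffDensity hσ (by fun_prop) hR0 hR)
    (intervalIntegrable_cutoffDensity hσ (by fun_prop) hR0 hR) fun s hs => ?_
  · exact cutoffDensity_le_cutoffDensity hσ hs.1 (hsq s hs) (by simpa using hφ1 s hs)
  · exact cutoffDensity_le_cutoffDensity hσ hs.1 (hsq s hs) (by simp [sq_nonneg])

end CutoffDensity

/-- The cutoff weight `M_φ(r) = exp(-κ ∫₀^{|r|} s ds/((1-s²)(1+σφ(s)²s²)))` is
sandwiched between the FENE weight `(1-|r|²)^{κ/2}` and the corrected weight
`((1-|r|²)/(1+σ|r|²))^{κ/(2(1+σ))}` on the open unit ball of ℝ². -/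
theorem cutoff_weight_sandwich (κ σ : ℝ) (hκ : 0 < κ) (hσ : 0 < σ)
    (φ : ℝ → ℝ) (hφmeas : Measurable φ)
    (hφrange : ∀ s ∈ Set.Icc (0:ℝ) 1, φ s ∈ Set.Icc (0:ℝ) 1)
    (Mφ : E2 → ℝ)
    (hMφ : ∀ r, Mφ r = Real.exp (-κ * ∫ s in (0:ℝ)..‖r‖,
      s / ((1 - s ^ 2) * (1 + σ * φ s ^ 2 * s ^ 2)))) :
    ∀ r ∈ Metric.ball (0 : E2) 1,
      (1 - ‖r‖ ^ 2) ^ (κ / 2) ≤ Mφ r ∧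
      Mφ r ≤ ((1 - ‖r‖ ^ 2) / (1 + σ * ‖r‖ ^ 2)) ^ (κ / (2 * (1 + σ))) := by
  intro r hr
  set R := ‖r‖
  have hR0 : 0 ≤ R := norm_nonneg r
  have hR1 : R < 1 := mem_ball_zero_iff.mp hr
  have hR : R ^ 2 < 1 := by nlinarith
  have hφ1 : ∀ s ∈ Set.Icc 0 R, φ s ^ 2 ≤ 1 := fun s hs => by
    obtain ⟨h0, h1⟩ := hφrange s ⟨hs.1, hs.2.trans hR1.le⟩
    exact pow_le_one₀ h0 h1
  obtain ⟨hlower, hupper⟩ := integral_cutoffDensity_mem_Icc hσ.le hφmeas hφ1 hR0 hR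
  have hfene : 0 < 1 - R ^ 2 := by linarith
  have hcorr : 0 < 1 + σ * R ^ 2 := by positivity
  have hM : Mφ r = exp (-κ * ∫ s in (0 : ℝ)..R, cutoffDensity σ φ s) := hMφ r
  rw [hM, rpow_def_of_pos hfene, rpow_def_of_pos (div_pos hfene hcorr),
    log_div hfene.ne' hcorr.ne', exp_le_exp, exp_le_exp]
  constructor
  · linarith [mul_le_mul_of_nonneg_left hupper hκ.le]
  · have hrearrange : (log (1 - R ^ 2) - log (1 + σ * R ^ 2)) * (κ / (2 * (1 + σ))) =
        -(κ * ((log (1 + σ * R ^ 2) - log (1 - R ^ 2)) / (2 * (1 + σ)))) := by ring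
    linarith [mul_le_mul_of_nonneg_left hlower hκ.le]
end
end

section
/- Let κ > 2 and let D be the open unit ball B(0,1) in ℝ². There exists a constant C_H > 0 such that for every continuously differentiable function g : D → ℝ with ∫_D (g(r)² + |∇g(r)|²)(1−|r|²)^{κ/2} dr < ∞ one has the weighted Hardy-type inequality ∫_D g(r)² (1−|r|²)^{κ/2−2} dr ≤ C_H ∫_D (g(r)² + |∇g(r)|²)(1−|r|²)^{κ/2} dr. -/
/-!
In polar coordinates the inequality splits into one inequality per ray `t ↦ g (t • v)`,
`‖v‖ = 1`, for the measure `t dt` on `(0, 1)`; write `β = κ / 2`, `u = 1 - t²` and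
`φ t = g (t • v)`. The function `F t = t² u^(β-1) φ²` vanishes at `0`, is nonnegative, and a
sum-of-squares computation bounds its derivative:
`F' + (β - 1) t u^(β-2) φ² ≤ 2β²/(β-1) · t u^β (φ² + φ'²)` on `[0, 1)`.
Integrating over `[0, s]` and letting `s → 1` gives the ray inequality with constant
`2β² / (β - 1)²`.
-/

open MeasureTheory Real

noncomputable section

open Set Metric

lemma ContinuousOn.measurable_indicator {α γ : Type*} [TopologicalSpace α] [MeasurableSpace α]
    [OpensMeasurableSpace α] [TopologicalSpace γ] [MeasurableSpace γ] [BorelSpace γ] [Zero γ]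
    {f : α → γ} {s : Set α} (hf : ContinuousOn f s) (hs : MeasurableSet s) :
    Measurable (s.indicator f) := by
  classical
  rw [← piecewise_eq_indicator]
  exact hf.measurable_piecewise continuousOn_const hs

lemma integral_le_mul_integral_of_lintegral_le {α : Type*} [MeasurableSpace α] {μ : Measure α}
    {f g : α → ℝ} {C : ℝ} (hC : 0 ≤ C) (hf₀ : 0 ≤ᵐ[μ] f) (hfm : AEStronglyMeasurable f μ)
    (hg₀ : 0 ≤ᵐ[μ] g) (hg : Integrable g μ)
    (h : ∫⁻ x, ENNReal.ofReal (f x) ∂μ ≤ ENNReal.ofReal C * ∫⁻ x, ENNReal.ofReal (g x) ∂μ) :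
    ∫ x, f x ∂μ ≤ C * ∫ x, g x ∂μ := by
  rw [← ofReal_integral_eq_lintegral_ofReal hg hg₀, ← ENNReal.ofReal_mul hC] at h
  rw [integral_eq_lintegral_of_nonneg_ae hf₀ hfm]
  exact ENNReal.toReal_le_of_le_ofReal (mul_nonneg hC (integral_nonneg_of_ae hg₀)) h

lemma setLIntegral_Ioc_ofReal_eq {f : ℝ → ℝ} {a b : ℝ} (hab : a ≤ b)
    (hf : IntervalIntegrable f volume a b) (h0 : ∀ t ∈ Ioc a b, 0 ≤ f t) :
    ∫⁻ t in Ioc a b, ENNReal.ofReal (f t) = ENNReal.ofReal (∫ t in a..b, f t) := by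
  rw [intervalIntegral.integral_of_le hab,
    ofReal_integral_eq_lintegral_ofReal hf.1 (ae_restrict_of_forall_mem measurableSet_Ioc h0)]

lemma Ioo_zero_one_eq_iUnion_Ioc :
    Ioo (0 : ℝ) 1 = ⋃ n : ℕ, Ioc 0 (1 - 1 / ((n : ℝ) + 1)) := by
  ext t
  simp only [mem_iUnion, mem_Ioc, mem_Ioo]
  constructor
  · rintro ⟨h0, h1⟩
    obtain ⟨n, hn⟩ := exists_nat_one_div_lt (sub_pos.2 h1)
    exact ⟨n, h0, by linarith⟩
  · rintro ⟨n, h0, hs⟩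
    exact ⟨h0, hs.trans_lt (sub_lt_self _ Nat.one_div_pos_of_nat)⟩

lemma hardy_quadratic_le {β t : ℝ} (hβ : 1 < β) (ht : t ^ 2 ≤ 1) (u x y : ℝ) :
    2 * t * u * x * y + 2 * β * u * x ^ 2
      ≤ (β - 1) * x ^ 2 + 2 * β ^ 2 / (β - 1) * u ^ 2 * (x ^ 2 + y ^ 2) := by
  have hβ' : 0 < β - 1 := sub_pos.2 hβ
  rw [← sub_nonneg, ← mul_nonneg_iff_of_pos_left (by positivity : 0 < 2 * (β - 1))]
  have key : 2 * (β - 1) * ((β - 1) * x ^ 2 + 2 * β ^ 2 / (β - 1) * u ^ 2 * (x ^ 2 + y ^ 2)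
      - (2 * t * u * x * y + 2 * β * u * x ^ 2))
      = x ^ 2 * ((β - 1) - 2 * β * u) ^ 2 + ((β - 1) * x - 2 * t * u * y) ^ 2
        + 4 * u ^ 2 * y ^ 2 * (β ^ 2 - t ^ 2) := by
    field_simp
    ring
  rw [key]
  have : 0 ≤ β ^ 2 - t ^ 2 := by nlinarith
  positivity

lemma one_sub_sq_pos_of_mem_Ico {t : ℝ} (ht : t ∈ Ico (0 : ℝ) 1) : 0 < 1 - t ^ 2 := by
  nlinarith [ht.1, ht.2]

lemma hardy_integrand_le {β t : ℝ} (hβ : 1 < β) (ht : t ∈ Ico (0 : ℝ) 1) (x y : ℝ) :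
    t * (1 - t ^ 2) ^ (β - 2) *
        (2 * t * (1 - t ^ 2) * x * y + 2 * β * (1 - t ^ 2) * x ^ 2 - 2 * (β - 1) * x ^ 2)
      + (β - 1) * (t * x ^ 2 * (1 - t ^ 2) ^ (β - 2))
      ≤ 2 * β ^ 2 / (β - 1) * (t * (x ^ 2 + y ^ 2) * (1 - t ^ 2) ^ β) := by
  have hu := one_sub_sq_pos_of_mem_Ico ht
  have hβu : (1 - t ^ 2) ^ β = (1 - t ^ 2) ^ (β - 2) * (1 - t ^ 2) ^ 2 := by
    conv_lhs => rw [show β = (β - 2) + 2 by ring]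
    rw [rpow_add hu, rpow_two]
  have key := hardy_quadratic_le hβ (by nlinarith [ht.1, ht.2] : t ^ 2 ≤ 1) (1 - t ^ 2) x y
  have hw : 0 ≤ t * (1 - t ^ 2) ^ (β - 2) := mul_nonneg ht.1 (rpow_nonneg hu.le _)
  rw [hβu]
  nlinarith [mul_le_mul_of_nonneg_left key hw]

lemma continuousOn_one_sub_sq_rpow (p : ℝ) :
    ContinuousOn (fun t : ℝ => (1 - t ^ 2) ^ p) (Ioo (-1) 1) := by
  refine ContinuousOn.rpow_const (by fun_prop) fun t ht => Or.inl ?_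
  nlinarith [ht.1, ht.2]

lemma intervalIntegrable_mul_one_sub_sq_rpow {f : ℝ → ℝ} {s : ℝ} (hs0 : 0 ≤ s) (hs1 : s < 1)
    (hf : ContinuousOn f (Icc 0 s)) (p : ℝ) :
    IntervalIntegrable (fun t => t * f t * (1 - t ^ 2) ^ p) volume 0 s :=
  ((continuousOn_id.mul hf).mul ((continuousOn_one_sub_sq_rpow p).mono fun _ ht =>
    ⟨by linarith [ht.1], by linarith [ht.2]⟩)).intervalIntegrable_of_Icc hs0

lemma hasDerivAt_sq_mul_one_sub_sq_rpow_mul_sq {β t : ℝ} {φ : ℝ → ℝ} {φ' : ℝ}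
    (hu : 0 < 1 - t ^ 2) (hφ : HasDerivAt φ φ' t) :
    HasDerivAt (fun s => s ^ 2 * (1 - s ^ 2) ^ (β - 1) * φ s ^ 2)
      (t * (1 - t ^ 2) ^ (β - 2) *
        (2 * t * (1 - t ^ 2) * φ t * φ' + 2 * β * (1 - t ^ 2) * φ t ^ 2 - 2 * (β - 1) * φ t ^ 2))
      t := by
  have hw := ((hasDerivAt_pow 2 t).const_sub 1).rpow_const (p := β - 1) (Or.inl hu.ne')
  refine (((hasDerivAt_pow 2 t).mul hw).mul (hφ.pow 2)).congr_deriv ?_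
  simp only [Pi.mul_apply, Pi.pow_apply]
  rw [show β - 1 - 1 = β - 2 by ring, show β - 1 = (β - 2) + 1 by ring, rpow_add_one hu.ne']
  push_cast
  ring

lemma intervalIntegral_hardy_le {β : ℝ} (hβ : 1 < β) {φ ψ : ℝ → ℝ}
    (hφ : ∀ t ∈ Ico (0 : ℝ) 1, HasDerivAt φ (ψ t) t) (hψ : ContinuousOn ψ (Ico 0 1))
    {s : ℝ} (hs0 : 0 ≤ s) (hs1 : s < 1) :
    ∫ t in 0..s, t * φ t ^ 2 * (1 - t ^ 2) ^ (β - 2)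
      ≤ 2 * β ^ 2 / (β - 1) ^ 2 * ∫ t in 0..s, t * (φ t ^ 2 + ψ t ^ 2) * (1 - t ^ 2) ^ β := by
  have hβ' : 0 < β - 1 := sub_pos.2 hβ
  have hIcc : Icc 0 s ⊆ Ico (0 : ℝ) 1 := Icc_subset_Ico_right hs1
  have hIoo : Icc 0 s ⊆ Ioo (-1 : ℝ) 1 := fun t ht => ⟨by linarith [ht.1], by linarith [ht.2]⟩
  have hφc : ContinuousOn φ (Icc 0 s) := fun t ht =>
    (hφ t (hIcc ht)).continuousAt.continuousWithinAt
  have hψc : ContinuousOn ψ (Icc 0 s) := hψ.mono hIcc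
  set F : ℝ → ℝ := fun t => t ^ 2 * (1 - t ^ 2) ^ (β - 1) * φ t ^ 2
  set F' : ℝ → ℝ := fun t => t * (1 - t ^ 2) ^ (β - 2) *
    (2 * t * (1 - t ^ 2) * φ t * ψ t + 2 * β * (1 - t ^ 2) * φ t ^ 2 - 2 * (β - 1) * φ t ^ 2)
  set L : ℝ → ℝ := fun t => t * φ t ^ 2 * (1 - t ^ 2) ^ (β - 2)
  set R : ℝ → ℝ := fun t => t * (φ t ^ 2 + ψ t ^ 2) * (1 - t ^ 2) ^ β
  have hF'i : IntervalIntegrable F' volume 0 s := by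
    have := (continuousOn_one_sub_sq_rpow (β - 2)).mono hIoo
    exact ContinuousOn.intervalIntegrable_of_Icc hs0 (by fun_prop)
  have hLi : IntervalIntegrable L volume 0 s :=
    intervalIntegrable_mul_one_sub_sq_rpow hs0 hs1 (hφc.pow 2) _
  have hRi : IntervalIntegrable R volume 0 s :=
    intervalIntegrable_mul_one_sub_sq_rpow hs0 hs1 ((hφc.pow 2).add (hψc.pow 2)) _
  have hFTC : ∫ t in 0..s, F' t = F s - F 0 := by
    refine intervalIntegral.integral_eq_sub_of_hasDerivAt (fun t ht => ?_) hF'i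
    rw [uIcc_of_le hs0] at ht
    exact hasDerivAt_sq_mul_one_sub_sq_rpow_mul_sq (one_sub_sq_pos_of_mem_Ico (hIcc ht))
      (hφ t (hIcc ht))
  have hFs : 0 ≤ F s := mul_nonneg (mul_nonneg (sq_nonneg s)
    (rpow_nonneg (one_sub_sq_pos_of_mem_Ico (hIcc ⟨hs0, le_rfl⟩)).le _)) (sq_nonneg _)
  have hF0 : F 0 = 0 := by simp [F]
  have hmono : ∫ t in 0..s, (F' t + (β - 1) * L t) ≤ ∫ t in 0..s, 2 * β ^ 2 / (β - 1) * R t :=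
    intervalIntegral.integral_mono_on hs0 (hF'i.add (hLi.const_mul _)) (hRi.const_mul _)
      fun t ht => hardy_integrand_le hβ (hIcc ht) (φ t) (ψ t)
  rw [intervalIntegral.integral_add hF'i (hLi.const_mul _), intervalIntegral.integral_const_mul,
    intervalIntegral.integral_const_mul, hFTC, hF0] at hmono
  rw [sq (β - 1), ← div_div, div_mul_eq_mul_div, le_div_iff₀ hβ']
  linarith

lemma lintegral_hardy_le {β : ℝ} (hβ : 1 < β) {φ ψ : ℝ → ℝ}
    (hφ : ∀ t ∈ Ico (0 : ℝ) 1, HasDerivAt φ (ψ t) t) (hψ : ContinuousOn ψ (Ico 0 1)) :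
    ∫⁻ t in Ioo 0 1, ENNReal.ofReal (t * φ t ^ 2 * (1 - t ^ 2) ^ (β - 2))
      ≤ ENNReal.ofReal (2 * β ^ 2 / (β - 1) ^ 2) *
        ∫⁻ t in Ioo 0 1, ENNReal.ofReal (t * (φ t ^ 2 + ψ t ^ 2) * (1 - t ^ 2) ^ β) := by
  have hmono : Monotone fun n : ℕ => Ioc (0 : ℝ) (1 - 1 / ((n : ℝ) + 1)) := fun m n hmn =>
    Ioc_subset_Ioc_right (by gcongr)
  conv_lhs => rw [Ioo_zero_one_eq_iUnion_Ioc]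
  rw [setLIntegral_iUnion_of_directed _ hmono.directed_le]
  refine iSup_le fun n => ?_
  set s : ℝ := 1 - 1 / ((n : ℝ) + 1)
  have hs0 : 0 ≤ s := sub_nonneg.2 (div_le_one_of_le₀ (by simp) (by positivity))
  have hs1 : s < 1 := sub_lt_self _ Nat.one_div_pos_of_nat
  have hIcc : Icc 0 s ⊆ Ico (0 : ℝ) 1 := Icc_subset_Ico_right hs1
  have hφc : ContinuousOn φ (Icc 0 s) := fun t ht =>
    (hφ t (hIcc ht)).continuousAt.continuousWithinAt
  have hu : ∀ t ∈ Ioc 0 s, 0 ≤ 1 - t ^ 2 := fun t ht =>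
    (one_sub_sq_pos_of_mem_Ico (hIcc (Ioc_subset_Icc_self ht))).le
  calc ∫⁻ t in Ioc 0 s, ENNReal.ofReal (t * φ t ^ 2 * (1 - t ^ 2) ^ (β - 2))
      = ENNReal.ofReal (∫ t in 0..s, t * φ t ^ 2 * (1 - t ^ 2) ^ (β - 2)) :=
        setLIntegral_Ioc_ofReal_eq hs0
          (intervalIntegrable_mul_one_sub_sq_rpow hs0 hs1 (hφc.pow 2) _)
          fun t ht => mul_nonneg (mul_nonneg ht.1.le (sq_nonneg _)) (rpow_nonneg (hu t ht) _)
    _ ≤ ENNReal.ofReal (2 * β ^ 2 / (β - 1) ^ 2 *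
          ∫ t in 0..s, t * (φ t ^ 2 + ψ t ^ 2) * (1 - t ^ 2) ^ β) :=
        ENNReal.ofReal_le_ofReal (intervalIntegral_hardy_le hβ hφ hψ hs0 hs1)
    _ = ENNReal.ofReal (2 * β ^ 2 / (β - 1) ^ 2) *
          ∫⁻ t in Ioc 0 s, ENNReal.ofReal (t * (φ t ^ 2 + ψ t ^ 2) * (1 - t ^ 2) ^ β) := by
        rw [ENNReal.ofReal_mul (by positivity)]
        congr 1
        refine (setLIntegral_Ioc_ofReal_eq hs0 ?_ fun t ht => ?_).symm
        · exact intervalIntegrable_mul_one_sub_sq_rpow hs0 hs1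
            ((hφc.pow 2).add ((hψ.mono hIcc).pow 2)) _
        · exact mul_nonneg (mul_nonneg ht.1.le (by positivity)) (rpow_nonneg (hu t ht) _)
    _ ≤ _ := by gcongr

lemma lintegral_ray_hardy_le {E : Type*} [NormedAddCommGroup E] [InnerProductSpace ℝ E]
    [CompleteSpace E] {β : ℝ} (hβ : 1 < β) {g : E → ℝ} (hg : ContDiffOn ℝ 1 g (ball 0 1))
    {v : E} (hv : ‖v‖ = 1) :
    ∫⁻ ρ in Ioo 0 1, ENNReal.ofReal ρ *
        ENNReal.ofReal (g (ρ • v) ^ 2 * (1 - ‖ρ • v‖ ^ 2) ^ (β - 2))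
      ≤ ENNReal.ofReal (2 * β ^ 2 / (β - 1) ^ 2) * ∫⁻ ρ in Ioo 0 1, ENNReal.ofReal ρ *
        ENNReal.ofReal ((g (ρ • v) ^ 2 + ‖gradient g (ρ • v)‖ ^ 2) * (1 - ‖ρ • v‖ ^ 2) ^ β) := by
  have hnorm : ∀ ρ ∈ Ico (0 : ℝ) 1, ‖ρ • v‖ = ρ := fun ρ hρ => by
    rw [norm_smul, hv, mul_one, norm_of_nonneg hρ.1]
  have hmem : ∀ ρ ∈ Ico (0 : ℝ) 1, ρ • v ∈ ball (0 : E) 1 := fun ρ hρ => by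
    rw [mem_ball_zero_iff, hnorm ρ hρ]
    exact hρ.2
  have hφ : ∀ t ∈ Ico (0 : ℝ) 1, HasDerivAt (fun t => g (t • v)) (fderiv ℝ g (t • v) v) t :=
    fun t ht => by
      have hd := (hg.differentiableOn one_ne_zero).differentiableAt
        (isOpen_ball.mem_nhds (hmem t ht))
      have h := hd.hasFDerivAt.comp_hasDerivAt t ((hasDerivAt_id t).smul_const v)
      rw [one_smul] at h
      exact h
  have hψ : ContinuousOn (fun t : ℝ => fderiv ℝ g (t • v) v) (Ico 0 1) :=
    ((hg.continuousOn_fderiv_of_isOpen isOpen_ball le_rfl).comp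
      (continuous_id.smul continuous_const).continuousOn hmem).clm_apply continuousOn_const
  have hψle : ∀ t : ℝ, (fderiv ℝ g (t • v) v) ^ 2 ≤ ‖gradient g (t • v)‖ ^ 2 := fun t => by
    rw [← inner_gradient_left, ← sq_abs]
    have h := abs_real_inner_le_norm (gradient g (t • v)) v
    rw [hv, mul_one] at h
    exact pow_le_pow_left₀ (abs_nonneg _) h 2
  calc _ = ∫⁻ t in Ioo 0 1, ENNReal.ofReal (t * g (t • v) ^ 2 * (1 - t ^ 2) ^ (β - 2)) := by
        refine setLIntegral_congr_fun measurableSet_Ioo fun t ht => ?_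
        rw [← ENNReal.ofReal_mul ht.1.le, hnorm t (Ioo_subset_Ico_self ht), mul_assoc]
    _ ≤ _ := lintegral_hardy_le hβ hφ hψ
    _ ≤ _ := by
        gcongr 1
        refine setLIntegral_mono' measurableSet_Ioo fun t ht => ?_
        rw [← ENNReal.ofReal_mul ht.1.le, hnorm t (Ioo_subset_Ico_self ht), ← mul_assoc]
        have hu := one_sub_sq_pos_of_mem_Ico (Ioo_subset_Ico_self ht)
        exact ENNReal.ofReal_le_ofReal (mul_le_mul_of_nonneg_right
          (mul_le_mul_of_nonneg_left (add_le_add le_rfl (hψle t)) ht.1.le) (rpow_nonneg hu.le _))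

lemma norm_euclidean_cos_sin (θ : ℝ) : ‖!₂[cos θ, sin θ]‖ = 1 := by
  simp [EuclideanSpace.norm_eq, Fin.sum_univ_two]

lemma lintegral_eq_lintegral_polar {f : E2 → ENNReal} (hf : Measurable f) :
    ∫⁻ x, f x = ∫⁻ θ in Ioo (-π) π, ∫⁻ ρ in Ioi 0,
      ENNReal.ofReal ρ * f (ρ • !₂[cos θ, sin θ]) := by
  have he : MeasurePreserving (fun p : ℝ × ℝ => !₂[p.1, p.2]) :=
    (PiLp.volume_preserving_toLp (Fin 2)).comp (volume_preserving_finTwoArrow ℝ).symm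
  have hpolar : ∀ p : ℝ × ℝ, !₂[(polarCoord.symm p).1, (polarCoord.symm p).2]
      = p.1 • !₂[cos p.2, sin p.2] := fun p => by
    ext i
    fin_cases i <;> simp [polarCoord_symm_apply]
  rw [← he.lintegral_comp hf, ← lintegral_comp_polarCoord_symm, polarCoord_target,
    Measure.volume_eq_prod, ← Measure.prod_restrict, lintegral_prod_symm]
  · simp only [hpolar, smul_eq_mul]
  · exact ((ENNReal.measurable_ofReal.comp measurable_fst).smul
      (hf.comp (he.measurable.comp continuous_polarCoord_symm.measurable))).aemeasurable

lemma setLIntegral_Ioi_mul_indicator_ball_smul {E : Type*} [NormedAddCommGroup E]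
    [NormedSpace ℝ E] {v : E} (hv : ‖v‖ = 1) (g : ℝ → ENNReal) (F : E → ENNReal) :
    ∫⁻ ρ in Ioi 0, g ρ * (ball (0 : E) 1).indicator F (ρ • v)
      = ∫⁻ ρ in Ioo 0 1, g ρ * F (ρ • v) := by
  have hpre : (fun ρ : ℝ => ρ • v) ⁻¹' ball 0 1 = Ioo (-1) 1 := by
    ext ρ
    simp [norm_smul, hv, abs_lt]
  simp_rw [← indicator_comp_right (fun ρ : ℝ => ρ • v), hpre, ← indicator_mul_right]
  rw [setLIntegral_indicator measurableSet_Ioo, Ioo_inter_Ioi, max_eq_right (by norm_num)]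
  rfl

lemma setLIntegral_ball_le_of_forall_norm_eq_one {F₁ F₂ : E2 → ENNReal} {C : ENNReal}
    (hC : C ≠ ⊤) (h₁ : Measurable ((ball 0 1).indicator F₁))
    (h₂ : Measurable ((ball 0 1).indicator F₂))
    (h : ∀ v : E2, ‖v‖ = 1 → ∫⁻ ρ in Ioo 0 1, ENNReal.ofReal ρ * F₁ (ρ • v)
      ≤ C * ∫⁻ ρ in Ioo 0 1, ENNReal.ofReal ρ * F₂ (ρ • v)) :
    ∫⁻ x in ball 0 1, F₁ x ≤ C * ∫⁻ x in ball 0 1, F₂ x := by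
  rw [← lintegral_indicator measurableSet_ball, ← lintegral_indicator measurableSet_ball,
    lintegral_eq_lintegral_polar h₁, lintegral_eq_lintegral_polar h₂,
    ← lintegral_const_mul' _ _ hC]
  refine lintegral_mono fun θ => ?_
  simp only [setLIntegral_Ioi_mul_indicator_ball_smul (norm_euclidean_cos_sin θ)]
  exact h _ (norm_euclidean_cos_sin θ)

lemma one_sub_norm_sq_pos_of_mem_ball {E : Type*} [SeminormedAddCommGroup E] {r : E}
    (hr : r ∈ ball (0 : E) 1) : 0 < 1 - ‖r‖ ^ 2 := by
  have := mem_ball_zero_iff.1 hr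
  nlinarith [norm_nonneg r]

lemma continuousOn_one_sub_norm_sq_rpow {E : Type*} [SeminormedAddCommGroup E] (p : ℝ) :
    ContinuousOn (fun r : E => (1 - ‖r‖ ^ 2) ^ p) (ball 0 1) :=
  ContinuousOn.rpow_const (by fun_prop) fun _ hr =>
    Or.inl (one_sub_norm_sq_pos_of_mem_ball hr).ne'

lemma ContDiffOn.continuousOn_gradient {E : Type*} [NormedAddCommGroup E]
    [InnerProductSpace ℝ E] [CompleteSpace E] {g : E → ℝ} {s : Set E}
    (hg : ContDiffOn ℝ 1 g s) (hs : IsOpen s) : ContinuousOn (gradient g) s :=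
  (InnerProductSpace.toDual ℝ E).symm.continuous.comp_continuousOn
    (hg.continuousOn_fderiv_of_isOpen hs le_rfl)

/-- Weighted Hardy-type inequality on the open unit ball `D ⊂ ℝ²` for `κ > 2`:
there is `C_H > 0` such that for every `C¹` function `g` on `D` with
`∫_D (g² + |∇g|²)(1-|r|²)^{κ/2} dr < ∞` one has
`∫_D g² (1-|r|²)^{κ/2-2} dr ≤ C_H ∫_D (g² + |∇g|²)(1-|r|²)^{κ/2} dr`. -/
theorem weighted_hardy_inequality (κ : ℝ) (hκ : 2 < κ) :
    ∃ C > 0, ∀ g : E2 → ℝ,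
      ContDiffOn ℝ 1 g (Metric.ball (0 : E2) 1) →
      IntegrableOn
        (fun r => (g r ^ 2 + ‖gradient g r‖ ^ 2) * (1 - ‖r‖ ^ 2) ^ (κ / 2))
        (Metric.ball (0 : E2) 1) →
      ∫ r in Metric.ball (0 : E2) 1, g r ^ 2 * (1 - ‖r‖ ^ 2) ^ (κ / 2 - 2)
        ≤ C * ∫ r in Metric.ball (0 : E2) 1,
            (g r ^ 2 + ‖gradient g r‖ ^ 2) * (1 - ‖r‖ ^ 2) ^ (κ / 2) := by
  have hβ : 1 < κ / 2 := by linarith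
  have hC : 0 < 2 * (κ / 2) ^ 2 / (κ / 2 - 1) ^ 2 := by
    have : 0 < κ / 2 - 1 := by linarith
    positivity
  refine ⟨_, hC, fun g hg hint => ?_⟩
  have hL : ContinuousOn (fun r => g r ^ 2 * (1 - ‖r‖ ^ 2) ^ (κ / 2 - 2)) (ball 0 1) :=
    (hg.continuousOn.pow 2).mul (continuousOn_one_sub_norm_sq_rpow _)
  have hR : ContinuousOn (fun r => (g r ^ 2 + ‖gradient g r‖ ^ 2) * (1 - ‖r‖ ^ 2) ^ (κ / 2))
      (ball 0 1) := ((hg.continuousOn.pow 2).add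
        ((hg.continuousOn_gradient isOpen_ball).norm.pow 2)).mul
      (continuousOn_one_sub_norm_sq_rpow _)
  refine integral_le_mul_integral_of_lintegral_le hC.le ?_
    (hL.aestronglyMeasurable measurableSet_ball) ?_ hint ?_
  · exact ae_restrict_of_forall_mem measurableSet_ball fun r hr =>
      mul_nonneg (sq_nonneg _) (rpow_nonneg (one_sub_norm_sq_pos_of_mem_ball hr).le _)
  · exact ae_restrict_of_forall_mem measurableSet_ball fun r hr =>
      mul_nonneg (by positivity) (rpow_nonneg (one_sub_norm_sq_pos_of_mem_ball hr).le _)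
  exact setLIntegral_ball_le_of_forall_norm_eq_one ENNReal.ofReal_ne_top
    ((ENNReal.continuous_ofReal.comp_continuousOn hL).measurable_indicator measurableSet_ball)
    ((ENNReal.continuous_ofReal.comp_continuousOn hR).measurable_indicator measurableSet_ball)
    fun v hv => lintegral_ray_hardy_le hβ hg hv
end
end

section
/- With the noise coefficients σ_k as defined (depending on N ≥ 1 and a_τ > 0), for every x ∈ ℝ² one has the matrix identity Σ_{k∈K} σ_k(x) ⊗ σ_k(x) = 2 α_N I, where α_N := (1/2) Σ_{k∈K_{++}, N≤|k|≤2N} a_τ²/|k|⁴ and I is the 2×2 identity matrix; moreover, for fixed a_τ, α_N → 0 as N → ∞. -/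
open Real Filter
open scoped Classical

noncomputable section

/-- Squared Euclidean norm of a lattice vector `k ∈ ℤ²`. -/
def knormSq (k : ℤ × ℤ) : ℝ := ((k.1 : ℝ)) ^ 2 + ((k.2 : ℝ)) ^ 2

/-- Euclidean norm `|k|` of a lattice vector `k ∈ ℤ²`. -/
def knorm (k : ℤ × ℤ) : ℝ := Real.sqrt (knormSq k)

/-- The rotated vector `k^⊥ = (-k₂, k₁)`, as a vector of `ℝ²`. -/
def kperp (k : ℤ × ℤ) : Fin 2 → ℝ := ![-(k.2 : ℝ), (k.1 : ℝ)]

/-- Dot product `k·x` of a lattice vector with `x ∈ ℝ²`. -/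
def kdot (k : ℤ × ℤ) (x : Fin 2 → ℝ) : ℝ := (k.1 : ℝ) * x 0 + (k.2 : ℝ) * x 1

/-- The dyadic annulus condition `N ≤ |k| ≤ 2N`. -/
def inAnnulus (N : ℕ) (k : ℤ × ℤ) : Prop := (N : ℝ) ≤ knorm k ∧ knorm k ≤ 2 * N

/-- The noise amplitude `θ_k = a_τ/|k|²` on the annulus `N ≤ |k| ≤ 2N`, `0` elsewhere. -/
def θcoef (N : ℕ) (aτ : ℝ) (k : ℤ × ℤ) : ℝ :=
  if inAnnulus N k then aτ / knorm k ^ 2 else 0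

/-- The half-lattice `K₊ = K_{++} ∪ K_{+-}`. -/
def KPlus (k : ℤ × ℤ) : Prop := (0 ≤ k.1 ∧ 0 < k.2) ∨ (0 < k.1 ∧ k.2 ≤ 0)

/-- The half-lattice `K₋ = K_{-+} ∪ K_{--}`. -/
def KMinus (k : ℤ × ℤ) : Prop := (k.1 < 0 ∧ 0 ≤ k.2) ∨ (k.1 ≤ 0 ∧ k.2 < 0)

/-- The noise coefficients: `σ_k(x) = θ_k (k^⊥/|k|) cos(k·x)` for `k ∈ K₊`,
`σ_k(x) = θ_k (k^⊥/|k|) sin(k·x)` for `k ∈ K₋`, and `0` for `k = 0`. -/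
def σcoef (N : ℕ) (aτ : ℝ) (k : ℤ × ℤ) (x : Fin 2 → ℝ) : Fin 2 → ℝ :=
  if KPlus k then (θcoef N aτ k * Real.cos (kdot k x) / knorm k) • kperp k
  else if KMinus k then (θcoef N aτ k * Real.sin (kdot k x) / knorm k) • kperp k
  else 0

/-- A finite box of lattice points containing the annulus `N ≤ |k| ≤ 2N`; summing over
it realizes the (finite) sum over `k ∈ K`, since `θ_k` vanishes off the annulus. -/
def latticeBox (N : ℕ) : Finset (ℤ × ℤ) :=
  Finset.Icc (-(2 * (N : ℤ)), -(2 * (N : ℤ))) (2 * (N : ℤ), 2 * (N : ℤ))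

/-- `α_N = (1/2) Σ_{k ∈ K_{++}, N ≤ |k| ≤ 2N} a_τ²/|k|⁴`. -/
def alphaN (N : ℕ) (aτ : ℝ) : ℝ :=
  (1 / 2) * ∑ k ∈ (latticeBox N).filter (fun k => 0 ≤ k.1 ∧ 0 < k.2), θcoef N aτ k ^ 2

/-!
The four quadrants `K₊₊, K₊₋, K₋₋, K₋₊` are the images of `K₊₊` under the rotations by multiples
of `90°`. Pairing `k ∈ K₊` with `-k ∈ K₋` turns `cos²(k·x) + sin²(k·x)` into `1`, and pairing
`k ∈ K₊₊` with its rotation `k' ∈ K₊₋`, whose `k'^⊥` is `k`, gives `k^⊥ ⊗ k^⊥ + k ⊗ k = |k|² I`.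
For the decay, the annulus has `O(N²)` lattice points and each carries weight `θ_k² ≤ a_τ²/N⁴`.
-/

def latticeRot : ℤ × ℤ ≃ ℤ × ℤ where
  toFun k := (k.2, -k.1)
  invFun k := (-k.2, k.1)
  left_inv k := by simp
  right_inv k := by simp

@[simp]
lemma latticeRot_apply (k : ℤ × ℤ) : latticeRot k = (k.2, -k.1) := rfl

lemma latticeRot_latticeRot (k : ℤ × ℤ) : latticeRot (latticeRot k) = -k := by
  ext <;> simp

def KPlusPlus (k : ℤ × ℤ) : Prop := 0 ≤ k.1 ∧ 0 < k.2

def KPlusMinus (k : ℤ × ℤ) : Prop := 0 < k.1 ∧ k.2 ≤ 0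

lemma KPlusMinus_latticeRot_iff (k : ℤ × ℤ) : KPlusMinus (latticeRot k) ↔ KPlusPlus k := by
  simp only [KPlusMinus, KPlusPlus, latticeRot_apply]
  omega

lemma KPlus_neg_iff (k : ℤ × ℤ) : KPlus (-k) ↔ KMinus k := by
  simp only [KPlus, KMinus, Prod.fst_neg, Prod.snd_neg]
  omega

lemma not_KMinus_of_KPlus {k : ℤ × ℤ} (hk : KPlus k) : ¬ KMinus k := by
  simp only [KPlus, KMinus] at *
  omega

lemma eq_zero_of_not_KPlus_of_not_KMinus {k : ℤ × ℤ} (hp : ¬ KPlus k) (hm : ¬ KMinus k) :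
    k = 0 := by
  simp only [KPlus, KMinus] at hp hm
  ext <;> simp <;> omega

section LatticeSums

variable {M : Type*} [AddCommMonoid M] {s : Finset (ℤ × ℤ)}

lemma sum_eq_sum_KPlus_add_neg (hs : ∀ k, -k ∈ s ↔ k ∈ s) {f : ℤ × ℤ → M} (h0 : f 0 = 0) :
    ∑ k ∈ s, f k = ∑ k ∈ s.filter KPlus, (f k + f (-k)) := by
  rw [Finset.sum_add_distrib, ← Finset.sum_filter_add_sum_filter_not s KPlus]
  congr 1
  calc ∑ k ∈ s.filter (¬ KPlus ·), f k
      = ∑ k ∈ s.filter KMinus, f k := by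
        refine (Finset.sum_subset (Finset.monotone_filter_right s ?_) ?_).symm
        · exact fun k _ hm hp => not_KMinus_of_KPlus hp hm
        · intro k hk hk'
          simp only [Finset.mem_filter, not_and] at hk hk'
          rw [eq_zero_of_not_KPlus_of_not_KMinus hk.2 (hk' hk.1), h0]
    _ = ∑ k ∈ s.filter KPlus, f (-k) :=
        Finset.sum_equiv (Equiv.neg _) (by simp [hs, KPlus_neg_iff]) (by simp)

lemma sum_KPlus_eq_sum_KPlusPlus_add_latticeRot (hs : ∀ k, latticeRot k ∈ s ↔ k ∈ s)
    (g : ℤ × ℤ → M) :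
    ∑ k ∈ s.filter KPlus, g k = ∑ k ∈ s.filter KPlusPlus, (g k + g (latticeRot k)) := by
  have hdisj : Disjoint (s.filter KPlusPlus) (s.filter KPlusMinus) := by
    refine Finset.disjoint_filter.2 fun k _ hpp hpm => ?_
    simp only [KPlusPlus, KPlusMinus] at hpp hpm
    omega
  have hsplit : s.filter KPlus = s.filter KPlusPlus ∪ s.filter KPlusMinus := by
    ext k
    simp only [Finset.mem_filter, Finset.mem_union, KPlus, KPlusPlus, KPlusMinus, and_or_left]
  rw [Finset.sum_add_distrib, hsplit, Finset.sum_union hdisj]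
  congr 1
  exact (Finset.sum_equiv latticeRot (fun k => by
    simp only [Finset.mem_filter, hs, KPlusMinus_latticeRot_iff]) (by simp)).symm

end LatticeSums

lemma knormSq_ne_zero {k : ℤ × ℤ} (hk : k ≠ 0) : knormSq k ≠ 0 := by
  have : (k.1 : ℝ) ≠ 0 ∨ (k.2 : ℝ) ≠ 0 := by
    by_contra! h
    exact hk (Prod.ext (by exact_mod_cast h.1) (by exact_mod_cast h.2))
  unfold knormSq
  rcases this with h | h <;> positivity

lemma knorm_sq (k : ℤ × ℤ) : knorm k ^ 2 = knormSq k :=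
  Real.sq_sqrt (by unfold knormSq; positivity)

lemma knormSq_neg (k : ℤ × ℤ) : knormSq (-k) = knormSq k := by
  simp [knormSq]

lemma knormSq_latticeRot (k : ℤ × ℤ) : knormSq (latticeRot k) = knormSq k := by
  simp [knormSq]
  ring

lemma knorm_neg (k : ℤ × ℤ) : knorm (-k) = knorm k := by
  rw [knorm, knormSq_neg, knorm]

lemma θcoef_eq_of_knormSq_eq {k k' : ℤ × ℤ} (h : knormSq k' = knormSq k) (N : ℕ) (aτ : ℝ) :
    θcoef N aτ k' = θcoef N aτ k := by
  unfold θcoef inAnnulus knorm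
  rw [h]

lemma kdot_neg (k : ℤ × ℤ) (x : Fin 2 → ℝ) : kdot (-k) x = -kdot k x := by
  simp only [kdot, Prod.fst_neg, Prod.snd_neg, Int.cast_neg]
  ring

lemma kperp_neg (k : ℤ × ℤ) : kperp (-k) = -kperp k := by
  ext i; fin_cases i <;> simp [kperp]

lemma kperp_mul_kperp_add_kperp_latticeRot_mul (k : ℤ × ℤ) (i j : Fin 2) :
    kperp k i * kperp k j + kperp (latticeRot k) i * kperp (latticeRot k) j
      = knormSq k * if i = j then 1 else 0 := by
  fin_cases i <;> fin_cases j <;> simp [kperp, knormSq] <;> ring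

section Covariance

variable (N : ℕ) (aτ : ℝ) (x : Fin 2 → ℝ)

lemma σcoef_of_KPlus {k : ℤ × ℤ} (hk : KPlus k) :
    σcoef N aτ k x = (θcoef N aτ k * cos (kdot k x) / knorm k) • kperp k := by
  rw [σcoef, if_pos hk]

lemma σcoef_neg_of_KPlus {k : ℤ × ℤ} (hk : KPlus k) :
    σcoef N aτ (-k) x = (θcoef N aτ k * sin (kdot k x) / knorm k) • kperp k := by
  have hm : KMinus (-k) := by rwa [← KPlus_neg_iff, neg_neg]
  rw [σcoef, if_neg fun hp => not_KMinus_of_KPlus hp hm, if_pos hm, kperp_neg, kdot_neg,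
    knorm_neg, θcoef_eq_of_knormSq_eq (knormSq_neg k), sin_neg, smul_neg, ← neg_smul]
  congr 1
  ring

lemma σcoef_mul_add_σcoef_neg_mul {k : ℤ × ℤ} (hk : KPlus k) (i j : Fin 2) :
    σcoef N aτ k x i * σcoef N aτ k x j + σcoef N aτ (-k) x i * σcoef N aτ (-k) x j
      = θcoef N aτ k ^ 2 / knorm k ^ 2 * (kperp k i * kperp k j) := by
  simp only [σcoef_of_KPlus N aτ x hk, σcoef_neg_of_KPlus N aτ x hk, Pi.smul_apply, smul_eq_mul]
  linear_combination θcoef N aτ k ^ 2 / knorm k ^ 2 * (kperp k i * kperp k j)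
    * sin_sq_add_cos_sq (kdot k x)

theorem sum_σcoef_mul_σcoef {s : Finset (ℤ × ℤ)} (hs : ∀ k, latticeRot k ∈ s ↔ k ∈ s)
    (i j : Fin 2) :
    ∑ k ∈ s, σcoef N aτ k x i * σcoef N aτ k x j
      = (∑ k ∈ s.filter KPlusPlus, θcoef N aτ k ^ 2) * if i = j then 1 else 0 := by
  have hs_neg : ∀ k, -k ∈ s ↔ k ∈ s := fun k => by
    rw [← latticeRot_latticeRot, hs, hs]
  have hσ0 : σcoef N aτ 0 x = 0 := by simp [σcoef, KPlus, KMinus]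
  rw [sum_eq_sum_KPlus_add_neg hs_neg (by simp [hσ0]),
    Finset.sum_congr rfl fun k hk =>
      σcoef_mul_add_σcoef_neg_mul N aτ x (Finset.mem_filter.1 hk).2 i j,
    sum_KPlus_eq_sum_KPlusPlus_add_latticeRot hs, Finset.sum_mul]
  refine Finset.sum_congr rfl fun k hk => ?_
  have hk0 : k ≠ 0 := by
    rintro rfl
    simp [KPlusPlus] at hk
  rw [knorm_sq, knorm_sq, knormSq_latticeRot,
    θcoef_eq_of_knormSq_eq (knormSq_latticeRot k), ← mul_add,
    kperp_mul_kperp_add_kperp_latticeRot_mul]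
  field_simp [knormSq_ne_zero hk0]

end Covariance

lemma latticeRot_mem_latticeBox_iff (N : ℕ) (k : ℤ × ℤ) :
    latticeRot k ∈ latticeBox N ↔ k ∈ latticeBox N := by
  simp only [latticeBox, Finset.mem_Icc, Prod.le_def, latticeRot_apply]
  omega

lemma card_latticeBox (N : ℕ) : (latticeBox N).card = (4 * N + 1) ^ 2 := by
  rw [latticeBox, Finset.card_Icc_prod, Int.card_Icc, sq]
  congr 1 <;> omega

lemma θcoef_sq_le {N : ℕ} (hN : 0 < N) (aτ : ℝ) (k : ℤ × ℤ) :
    θcoef N aτ k ^ 2 ≤ aτ ^ 2 / (N : ℝ) ^ 4 := by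
  unfold θcoef
  split_ifs with hk
  · have hN4 : (N : ℝ) ^ 4 ≤ (knorm k ^ 2) ^ 2 := by
      rw [← pow_mul]
      exact pow_le_pow_left₀ (Nat.cast_nonneg N) hk.1 4
    rw [div_pow]
    exact div_le_div_of_nonneg_left (sq_nonneg aτ) (by positivity) hN4
  · rw [zero_pow two_ne_zero]
    positivity

lemma alphaN_eq (N : ℕ) (aτ : ℝ) :
    alphaN N aτ = 1 / 2 * ∑ k ∈ (latticeBox N).filter KPlusPlus, θcoef N aτ k ^ 2 := by
  unfold alphaN
  congr 2
  ext k
  simp only [Finset.mem_filter, KPlusPlus]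

lemma alphaN_nonneg (N : ℕ) (aτ : ℝ) : 0 ≤ alphaN N aτ := by
  rw [alphaN_eq]
  positivity

lemma alphaN_le {N : ℕ} (hN : 0 < N) (aτ : ℝ) : alphaN N aτ ≤ 25 / 2 * aτ ^ 2 / (N : ℝ) ^ 2 := by
  have hN' : (1 : ℝ) ≤ N := by exact_mod_cast hN
  have hcard : (((latticeBox N).filter KPlusPlus).card : ℝ) ≤ 25 * (N : ℝ) ^ 2 :=
    calc (((latticeBox N).filter KPlusPlus).card : ℝ)
        ≤ (4 * N + 1) ^ 2 := by
          exact_mod_cast (Finset.card_filter_le _ _).trans (card_latticeBox N).le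
      _ ≤ 25 * (N : ℝ) ^ 2 := by nlinarith
  rw [alphaN_eq]
  calc 1 / 2 * ∑ k ∈ (latticeBox N).filter KPlusPlus, θcoef N aτ k ^ 2
      ≤ 1 / 2 * (((latticeBox N).filter KPlusPlus).card • (aτ ^ 2 / (N : ℝ) ^ 4)) := by
        gcongr
        exact Finset.sum_le_card_nsmul _ _ _ fun k _ => θcoef_sq_le hN aτ k
    _ ≤ 1 / 2 * (25 * (N : ℝ) ^ 2 * (aτ ^ 2 / (N : ℝ) ^ 4)) := by
        rw [nsmul_eq_mul]
        gcongr
    _ = 25 / 2 * aτ ^ 2 / (N : ℝ) ^ 2 := by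
        field_simp

theorem tendsto_alphaN_atTop (aτ : ℝ) : Tendsto (fun N : ℕ => alphaN N aτ) atTop (nhds 0) := by
  have hbound : Tendsto (fun N : ℕ => 25 / 2 * aτ ^ 2 / (N : ℝ) ^ 2) atTop (nhds 0) :=
    tendsto_const_nhds.div_atTop
      ((tendsto_pow_atTop two_ne_zero).comp tendsto_natCast_atTop_atTop)
  refine squeeze_zero' (Eventually.of_forall fun N => alphaN_nonneg N aτ) ?_ hbound
  filter_upwards [eventually_gt_atTop 0] with N hN using alphaN_le hN aτ

theorem noise_spatial_covariance_general (aτ : ℝ) :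
    (∀ N : ℕ, 1 ≤ N → ∀ x : Fin 2 → ℝ, ∀ i j : Fin 2,
      ∑ k ∈ latticeBox N, σcoef N aτ k x i * σcoef N aτ k x j
        = 2 * alphaN N aτ * (if i = j then 1 else 0))
    ∧ Tendsto (fun N : ℕ => alphaN N aτ) atTop (nhds 0) := by
  refine ⟨fun N _ x i j => ?_, tendsto_alphaN_atTop aτ⟩
  rw [sum_σcoef_mul_σcoef N aτ x (latticeRot_mem_latticeBox_iff N) i j, alphaN_eq]
  ring

/-- The spatial covariance of the noise is isotropic:
`Σ_{k∈K} σ_k(x) ⊗ σ_k(x) = 2 α_N I` for every `x ∈ ℝ²`, and `α_N → 0` as `N → ∞`. -/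
theorem noise_spatial_covariance (aτ : ℝ) (haτ : 0 < aτ) :
    (∀ N : ℕ, 1 ≤ N → ∀ x : Fin 2 → ℝ, ∀ i j : Fin 2,
      ∑ k ∈ latticeBox N, σcoef N aτ k x i * σcoef N aτ k x j
        = 2 * alphaN N aτ * (if i = j then 1 else 0))
    ∧ Tendsto (fun N : ℕ => alphaN N aτ) atTop (nhds 0) :=
  noise_spatial_covariance_general aτ
end
end
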